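/- arXiv:2505.10809 — 2 statements merged into one kernel-verified Lean document; each statement's English description precedes it below -/
import Mathlib

section
/- Let C and D be pointed categories admitting finite limits and finite colimits, let n ≥ 0, and let F : C ⥤ D be a functor preserving the zero object which admits a right adjoint F* : D ⥤ C. If the identity functor of D is n-excisive, then both F : C ⥤ D and F* : D ⥤ C are n-excisive functors. -/
open CategoryTheory CategoryTheory.Limits

universe v u v' u'

variable {σ : Type} {C : Type u} [Category.{v} C]

/-- The canonical cone with vertex `X ∅` over the restriction of the `S`-cube `X`
to the poset of nonempty subsets of `S`. -/
def cartesianCone (X : Finset σ ⥤ C) :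
    Cone (ObjectProperty.ι (fun T : Finset σ => T.Nonempty : ObjectProperty (Finset σ)) ⋙ X) where
  pt := X.obj ∅
  π :=
    { app := fun T => X.map (homOfLE (Finset.empty_subset T.obj))
      naturality := fun T T' f => by
        dsimp
        rw [Category.id_comp, ← X.map_comp]
        rfl }

/-- An `S`-cube is Cartesian if the canonical cone with vertex `X ∅` over its restriction
to nonempty subsets is a limit cone. -/
def IsCartesianCube (X : Finset σ ⥤ C) : Prop :=
  Nonempty (IsLimit (cartesianCone X))

/-- The canonical cocone with vertex `X T` over the restriction of the `S`-cube `X`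
to the poset of subsets of `T` having at most one element. -/
def cubeCocone (X : Finset σ ⥤ C) (T : Finset σ) :
    Cocone (ObjectProperty.ι
      (fun T' : Finset σ => T'.card ≤ 1 ∧ T' ⊆ T : ObjectProperty (Finset σ)) ⋙ X) where
  pt := X.obj T
  ι :=
    { app := fun T' => X.map (homOfLE T'.property.2)
      naturality := fun T' T'' f => by
        dsimp
        rw [Category.comp_id, ← X.map_comp]
        rfl }

/-- An `S`-cube `X` is strongly coCartesian if it is a pointwise left Kan extension of its
restriction to the poset `P_{≤1}(S)` of subsets having at most one element: i.e. for every
`T ⊆ S`, the canonical cocone with vertex `X T` over the restriction of `X` to subsets of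
`T` with at most one element is a colimit cocone. -/
def IsStronglyCoCartesian (X : Finset σ ⥤ C) : Prop :=
  ∀ T : Finset σ, Nonempty (IsColimit (cubeCocone X T))

/-- A functor `F : C ⥤ D` is `n`-excisive if for every finite set `S` with exactly `n + 1`
elements, `F` sends strongly coCartesian `S`-cubes of `C` to Cartesian `S`-cubes of `D`. -/
def IsExcisive {D : Type u'} [Category.{v'} D] (n : ℕ) (F : C ⥤ D) : Prop :=
  ∀ (σ : Type) [Fintype σ], Fintype.card σ = n + 1 →
    ∀ X : Finset σ ⥤ C, IsStronglyCoCartesian X → IsCartesianCube (X ⋙ F)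

section

variable {D : Type u'} [Category.{v'} D]

lemma IsStronglyCoCartesian.comp {X : Finset σ ⥤ C} (hX : IsStronglyCoCartesian X)
    (F : C ⥤ D) [PreservesColimitsOfSize.{0, 0} F] : IsStronglyCoCartesian (X ⋙ F) := fun T =>
  ⟨IsColimit.ofIsoColimit (isColimitOfPreserves F (hX T).some)
    (Cocone.ext (Iso.refl _) fun T' => by simp [cubeCocone])⟩

lemma IsCartesianCube.comp {X : Finset σ ⥤ C} (hX : IsCartesianCube X)
    (G : C ⥤ D) [PreservesLimitsOfSize.{0, 0} G] : IsCartesianCube (X ⋙ G) :=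
  ⟨IsLimit.ofIsoLimit (isLimitOfPreserves G hX.some)
    (Cone.ext (Iso.refl _) fun T => by simp [cartesianCone])⟩

variable {E : Type*} [Category E] {n : ℕ}

lemma IsExcisive.comp_of_preservesColimits {H : D ⥤ E} (hH : IsExcisive n H)
    (F : C ⥤ D) [PreservesColimitsOfSize.{0, 0} F] : IsExcisive n (F ⋙ H) :=
  fun σ _ hσ X hX => hH σ hσ (X ⋙ F) (hX.comp F)

lemma IsExcisive.comp_of_preservesLimits {H : C ⥤ D} (hH : IsExcisive n H)
    (G : D ⥤ E) [PreservesLimitsOfSize.{0, 0} G] : IsExcisive n (H ⋙ G) :=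
  fun σ _ hσ X hX => (hH σ hσ X hX).comp G

end

theorem excisive_of_adjoint_general {C : Type u} [Category.{v} C] {D : Type u'} [Category.{v'} D]
    (n : ℕ) (F : C ⥤ D) (G : D ⥤ C) (adj : F ⊣ G)
    (hD : IsExcisive n (𝟭 D)) :
    IsExcisive n F ∧ IsExcisive n G := by
  have := adj.leftAdjoint_preservesColimits
  have := adj.rightAdjoint_preservesLimits
  -- `F ⋙ 𝟭 D` and `𝟭 D ⋙ G` are `F` and `G` up to definitional unfolding.
  exact ⟨hD.comp_of_preservesColimits F, hD.comp_of_preservesLimits G⟩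

/-- Let `C`, `D` be pointed categories with finite limits and colimits,
`n ≥ 0`, and `F : C ⥤ D` a functor preserving the zero object admitting a right adjoint
`G : D ⥤ C`. If the identity functor of `D` is `n`-excisive, then both `F` and `G` are
`n`-excisive functors. -/
theorem excisive_of_adjoint {C : Type u} [Category.{v} C] {D : Type u'} [Category.{v'} D]
    [HasZeroObject C] [HasFiniteLimits C] [HasFiniteColimits C]
    [HasZeroObject D] [HasFiniteLimits D] [HasFiniteColimits D]
    (n : ℕ) (F : C ⥤ D) (G : D ⥤ C) (adj : F ⊣ G)
    (hF : ∀ X : C, IsZero X → IsZero (F.obj X))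
    (hD : IsExcisive n (𝟭 D)) :
    IsExcisive n F ∧ IsExcisive n G :=
  excisive_of_adjoint_general n F G adj hD
end

section
/- Let C be a category, D a category with finite limits, F : C ⥤ D a functor, S a finite set, X : P(S) ⥤ C any S-cube, and S' ⊆ S a nonempty subset. Then the S-cube I ↦ F(X(I ∪ S')) (with structure maps induced by inclusions of subsets) is a Cartesian S-cube of D. -/
open CategoryTheory CategoryTheory.Limits

universe v u v' u'

variable {σ : Type} {C : Type u} [Category.{v} C]

/-- For a subset `S' ⊆ S`, the monotone map `I ↦ I ∪ S'` on subsets of `S`. -/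
def unionRightMonotone [DecidableEq σ] (S' : Finset σ) :
    Monotone (fun I : Finset σ => I ∪ S') :=
  fun _ _ h => Finset.union_subset_union h (Finset.Subset.refl S')

/-!
Inclusions `I ⊆ J` with `J ⊆ I ∪ S'` become equalities after `· ∪ S'`, so the cube
`I ↦ F (X (I ∪ S'))` inverts them. For any cube `Y` inverting them, a cone over the nonempty
subsets factors uniquely through `Y ∅ ≅ Y S'` via its leg at `S'`; its leg at a nonempty `J` is
then forced, since `Y J → Y (J ∪ S')` is invertible and both `J` and `S'` map to `J ∪ S'`.
-/

theorem isCartesianCube_of_isIso_map [DecidableEq σ] (Y : Finset σ ⥤ C) (T : Finset σ)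
    (hT : T.Nonempty)
    (hY : ∀ ⦃I J : Finset σ⦄ (h : I ⊆ J), J ⊆ I ∪ T → IsIso (Y.map (homOfLE h))) :
    IsCartesianCube Y := by
  have : IsIso (Y.map (homOfLE (Finset.empty_subset T))) := hY _ (by simp)
  let e : Y.obj ∅ ≅ Y.obj T := asIso (Y.map (homOfLE (Finset.empty_subset T)))
  refine ⟨{ lift := fun s => s.π.app ⟨T, hT⟩ ≫ e.inv, fac := ?_, uniq := ?_ }⟩
  · intro s J
    have hJT : J.obj ⊆ J.obj ∪ T := Finset.subset_union_left
    have : IsIso (Y.map (homOfLE hJT)) := hY _ le_rfl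
    let U : ObjectProperty.FullSubcategory (fun T : Finset σ => T.Nonempty) :=
      ⟨J.obj ∪ T, hT.mono Finset.subset_union_right⟩
    have hJU := s.w (ObjectProperty.homMk (homOfLE hJT) : J ⟶ U)
    have hTU := s.w (ObjectProperty.homMk (homOfLE Finset.subset_union_right) : ⟨T, hT⟩ ⟶ U)
    dsimp [cartesianCone] at hJU hTU ⊢
    rw [← cancel_mono (Y.map (homOfLE hJT)), hJU, ← hTU, Category.assoc, Category.assoc,
      ← Y.map_comp]
    congr 1
    rw [Iso.inv_comp_eq]
    exact Y.map_comp (homOfLE (Finset.empty_subset T)) (homOfLE Finset.subset_union_right)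
  · intro s m hm
    exact (Iso.eq_comp_inv e).2 (hm ⟨T, hT⟩)

theorem cartesian_of_union_nonempty_general {σ : Type} [DecidableEq σ]
    {C : Type u} [Category.{v} C] {D : Type u'} [Category.{v'} D]
    (F : C ⥤ D) (X : Finset σ ⥤ C) (S' : Finset σ) (hS' : S'.Nonempty) :
    IsCartesianCube ((unionRightMonotone S').functor ⋙ X ⋙ F) := by
  refine isCartesianCube_of_isIso_map _ S' hS' fun I J hIJ hJ => ?_
  have hunion : I ∪ S' = J ∪ S' :=
    le_antisymm (Finset.union_subset_union hIJ le_rfl)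
      (Finset.union_subset hJ Finset.subset_union_right)
  have := homOfLE_isIso_of_eq (unionRightMonotone S' hIJ) hunion
  change IsIso ((X ⋙ F).map (homOfLE (unionRightMonotone S' hIJ)))
  infer_instance

/-- Let `C` be a category, `D` a category with finite limits,
`F : C ⥤ D` a functor, `S` a finite set, `X : P(S) ⥤ C` any `S`-cube and `S' ⊆ S` a
nonempty subset. Then the `S`-cube `I ↦ F (X (I ∪ S'))` is a Cartesian `S`-cube of `D`. -/
theorem cartesian_of_union_nonempty {σ : Type} [Fintype σ] [DecidableEq σ]
    {C : Type u} [Category.{v} C] {D : Type u'} [Category.{v'} D] [HasFiniteLimits D]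
    (F : C ⥤ D) (X : Finset σ ⥤ C) (S' : Finset σ) (hS' : S'.Nonempty) :
    IsCartesianCube ((unionRightMonotone S').functor ⋙ X ⋙ F) :=
  cartesian_of_union_nonempty_general F X S' hS'
end
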